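/- arXiv:1807.08162 — 3 statements merged into one kernel-verified Lean document; each statement's English description precedes it below -/
import Mathlib

section
/- For every natural number k, the polynomials h_k and h_{k+1} have no common non-unit factor in ℚ[x,y]; that is, any polynomial dividing both h_k and h_{k+1} is a nonzero constant. -/
/-! A common divisor of `h k` and `h (k+1)` divides `h (k+1)^2 - h (k+2) h k = y^(k+1)`
(the Cassini-type identity of the recurrence), hence is a unit times a power of the prime `y`.
But `y` divides no `h n`, because setting `y = 0` turns `h n` into `x^n`. -/

open MvPolynomial

/-- The complete homogeneous symmetric polynomial of degree `k` in two variables,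
expressed in the elementary symmetric polynomials `x = X 0`, `y = X 1`. -/
noncomputable def h : ℕ → MvPolynomial (Fin 2) ℚ
  | 0 => 1
  | 1 => X 0
  | (k + 2) => X 0 * h (k + 1) - X 1 * h k

theorem h_add_two (k : ℕ) : h (k + 2) = X 0 * h (k + 1) - X 1 * h k := rfl

theorem h_sq_sub_h_mul_h (k : ℕ) : h (k + 1) ^ 2 - h (k + 2) * h k = X 1 ^ (k + 1) := by
  induction k with
  | zero => simp only [h, mul_one, zero_add, pow_one]; ring
  | succ k ih =>
    rw [h_add_two (k + 1), h_add_two k] at *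
    linear_combination X 1 * ih

theorem aeval_h (n : ℕ) :
    aeval ![Polynomial.X, (0 : Polynomial ℚ)] (h n) = Polynomial.X ^ n := by
  induction n using Nat.twoStepInduction with
  | zero => simp [h]
  | one => simp [h]
  | more n ih₀ ih₁ => simp [h_add_two, ih₀, ih₁, pow_succ']

theorem X_one_not_dvd_h (n : ℕ) : ¬ X 1 ∣ h n := by
  intro hdvd
  have : (0 : Polynomial ℚ) ∣ Polynomial.X ^ n := by
    simpa [aeval_h] using map_dvd (aeval ![Polynomial.X, (0 : Polynomial ℚ)]) hdvd
  exact pow_ne_zero n Polynomial.X_ne_zero (zero_dvd_iff.mp this)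

theorem isRelPrime_X_one_pow_h (m n : ℕ) : IsRelPrime (X 1 ^ m) (h n) :=
  ((X_prime.irreducible.isRelPrime_iff_not_dvd).mpr (X_one_not_dvd_h n)).pow_left

/-- `h k` and `h (k+1)` have no common non-unit factor in `ℚ[x,y]`: any common
divisor is a unit (i.e. a nonzero constant). -/
theorem stmt3 (k : ℕ) (d : MvPolynomial (Fin 2) ℚ) (hd1 : d ∣ h k) (hd2 : d ∣ h (k + 1)) :
    IsUnit d := by
  have hy : d ∣ X 1 ^ (k + 1) := by
    rw [← h_sq_sub_h_mul_h]
    exact dvd_sub (dvd_pow hd2 two_ne_zero) (hd1.mul_left _)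
  exact isRelPrime_X_one_pow_h (k + 1) k hy hd1
end

section
/- For every n ≥ 1, the quotient ring ℚ[x,y]/(h_{n+1}, h_{n+2}) is a finite-dimensional ℚ-vector space of dimension (n+1)(n+2)/2. -/
open MvPolynomial

/-!
Polynomials of total degree `≤ n` form a complement of `I = (h_{n+1}, h_{n+2})`.

They span modulo `I`: `y^j h_i ∈ I` whenever `i + j ≥ n + 1`, and `h_i = x^i + (terms of lower
total degree)`, so every monomial `x^a y^b` with `a + b > n` is congruent to a polynomial of
smaller total degree.

They meet `I` only in `0`: the substitution `x ↦ u + v`, `y ↦ u v` is injective and turns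
`(u - v) h_k` into `u^{k+1} - v^{k+1}`, so it maps `(u - v) I` into the monomial ideal
`(u^{n+2}, v^{n+2})`, while it maps a polynomial of total degree `≤ n` to one of degree `≤ n` in
each of `u`, `v`.
-/

namespace MvPolynomial

variable {σ R : Type*}

section CommSemiring

variable [CommSemiring R]

theorem degreeOf_X_le_one [Nontrivial R] (i j : σ) :
    degreeOf i (X j : MvPolynomial σ R) ≤ 1 := by
  classical
  rw [degreeOf_X]
  split_ifs <;> simp

theorem degreeOf_aeval_le {τ : Type*} (i : τ) {g : σ → MvPolynomial τ R} {k : ℕ}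
    (hg : ∀ j, degreeOf i (g j) ≤ k) (p : MvPolynomial σ R) :
    degreeOf i (aeval g p) ≤ p.totalDegree * k := by
  conv_lhs => rw [p.as_sum, map_sum]
  refine (degreeOf_sum_le _ _ _).trans (Finset.sup_le fun m hm => ?_)
  rw [aeval_monomial, algebraMap_eq]
  refine (degreeOf_C_mul_le _ _ _).trans ((degreeOf_prod_le _ _ _).trans ?_)
  calc ∑ j ∈ m.support, degreeOf i (g j ^ m j)
      ≤ ∑ j ∈ m.support, m j * k :=
        Finset.sum_le_sum fun j _ => (degreeOf_pow_le _ _ _).trans (Nat.mul_le_mul_left _ (hg j))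
    _ = (m.sum fun _ e => e) * k := by rw [Finsupp.sum, Finset.sum_mul]
    _ ≤ p.totalDegree * k := Nat.mul_le_mul_right _ (le_totalDegree hm)

theorem eq_zero_of_degreeOf_le_of_mem_span_X_pow {q : MvPolynomial σ R} {d : ℕ}
    (hdeg : ∀ i, degreeOf i q ≤ d)
    (hq : q ∈ Ideal.span (Set.range fun i => (X i ^ (d + 1) : MvPolynomial σ R))) : q = 0 := by
  have hmonomial : (Set.range fun i => (X i ^ (d + 1) : MvPolynomial σ R)) =
      (fun s => monomial s 1) '' Set.range fun i => Finsupp.single i (d + 1) := by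
    rw [← Set.range_comp]
    simp [Function.comp_def, X_pow_eq_monomial]
  rw [hmonomial, mem_ideal_span_monomial_image] at hq
  refine support_eq_empty.1 (Finset.eq_empty_of_forall_notMem fun m hm => ?_)
  obtain ⟨_, ⟨i, rfl⟩, hle⟩ := hq m hm
  have := (hle i).trans ((monomial_le_degreeOf i hm).trans (hdeg i))
  simp at this

theorem totalDegree_X_mul_le [Nontrivial R] (i : σ) (p : MvPolynomial σ R) :
    (X i * p).totalDegree ≤ p.totalDegree + 1 :=
  (totalDegree_mul _ _).trans (by rw [totalDegree_X, add_comm])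

theorem restrictTotalDegree_le {d : ℕ} {N : Submodule R (MvPolynomial σ R)}
    (hN : ∀ m : σ →₀ ℕ, (m.sum fun _ e => e) ≤ d → monomial m 1 ∈ N) :
    restrictTotalDegree σ R d ≤ N := by
  intro p hp
  rw [mem_restrictTotalDegree] at hp
  rw [p.as_sum]
  refine Submodule.sum_mem _ fun m hm => ?_
  rw [← mul_one (coeff m p), ← smul_eq_mul, ← smul_monomial]
  exact N.smul_mem _ (hN m ((le_totalDegree hm).trans hp))

theorem monomial_one_fin_two (m : Fin 2 →₀ ℕ) :
    (monomial m 1 : MvPolynomial (Fin 2) R) = X 0 ^ m 0 * X 1 ^ m 1 := by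
  rw [monomial_eq, C_1, one_mul, Finsupp.prod_fintype _ _ fun _ => pow_zero _, Fin.prod_univ_two]

end CommSemiring

section CommRing

variable [CommRing R]

theorem finrank_restrictTotalDegree_fin_two [Nontrivial R] (n : ℕ) :
    Module.finrank R (restrictTotalDegree (Fin 2) R n) = (n + 1) * (n + 2) / 2 := by
  have hS : {m : Fin 2 →₀ ℕ | (m.sum fun _ e => e) ≤ n} =
      ↑((Finset.range (n + 1)).biUnion
        fun k => (Finset.univ : Finset (Fin 2)).finsuppAntidiag k) := by
    ext m
    simp [Finset.mem_finsuppAntidiag, Finsupp.sum_fintype]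
  have hdisj : Set.PairwiseDisjoint (↑(Finset.range (n + 1)) : Set ℕ)
      fun k => (Finset.univ : Finset (Fin 2)).finsuppAntidiag k := by
    intro k _ l _ hkl
    refine Finset.disjoint_left.2 fun m hk hl => hkl ?_
    rw [Finset.mem_finsuppAntidiag] at hk hl
    exact hk.1.symm.trans hl.1
  rw [restrictTotalDegree, Module.finrank_eq_nat_card_basis (basisRestrictSupport R _), hS,
    Nat.card_coe_set_eq, Set.ncard_coe_finset, Finset.card_biUnion hdisj]
  simp only [Finset.card_finsuppAntidiag_nat_eq_choose, Finset.card_univ, Fintype.card_fin]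
  calc ∑ k ∈ Finset.range (n + 1), (2 + k - 1).choose k
      = ∑ k ∈ Finset.range (n + 2), k := by
        rw [Finset.sum_range_succ' (fun k => k), add_zero]
        refine Finset.sum_congr rfl fun k _ => ?_
        rw [show 2 + k - 1 = k + 1 by omega, Nat.choose_succ_self_right]
    _ = (n + 1) * (n + 2) / 2 := by rw [Finset.sum_range_id, mul_comm]; rfl

variable (R) in
/-- The substitution `x ↦ u + v`, `y ↦ u v`. -/
noncomputable def aevalEsymm : MvPolynomial (Fin 2) R →ₐ[R] MvPolynomial (Fin 2) R :=
  aeval fun i : Fin 2 => esymm (Fin 2) R (i + 1)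

theorem aevalEsymm_injective : Function.Injective (aevalEsymm R) := fun _ _ hpq =>
  esymmAlgHom_injective R (Fintype.card_fin 2).ge
    (Subtype.ext (by rw [esymmAlgHom_apply, esymmAlgHom_apply]; exact hpq))

@[simp]
theorem aevalEsymm_X_zero : aevalEsymm R (X 0) = X 0 + X 1 := by
  simp [aevalEsymm, esymm_one, Fin.sum_univ_two]

@[simp]
theorem aevalEsymm_X_one : aevalEsymm R (X 1) = X 0 * X 1 := by
  have : (Finset.univ : Finset (Fin 2)).powersetCard 2 = {Finset.univ} := by decide
  simp [aevalEsymm, esymm, this, Fin.prod_univ_two]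

theorem degreeOf_aevalEsymm_X_le_one [Nontrivial R] (i j : Fin 2) :
    degreeOf i (aevalEsymm R (X j)) ≤ 1 := by
  revert j
  refine Fin.forall_fin_two.2 ⟨?_, ?_⟩
  · rw [aevalEsymm_X_zero]
    exact (degreeOf_add_le _ _ _).trans (max_le (degreeOf_X_le_one _ _) (degreeOf_X_le_one _ _))
  · rw [aevalEsymm_X_one]
    revert i
    refine Fin.forall_fin_two.2 ⟨?_, ?_⟩
    · rw [degreeOf_mul_X_of_ne _ (by decide)]
      exact degreeOf_X_le_one _ _
    · exact (degreeOf_mul_X_self _ _).trans (by simp [degreeOf_X])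

theorem degreeOf_aevalEsymm_le [Nontrivial R] (i : Fin 2) (p : MvPolynomial (Fin 2) R) :
    degreeOf i (aevalEsymm R p) ≤ p.totalDegree := by
  refine (degreeOf_aeval_le i (k := 1) (fun j => ?_) p).trans (mul_one _).le
  simpa [aevalEsymm] using degreeOf_aevalEsymm_X_le_one (R := R) i j

end CommRing

end MvPolynomial

theorem h_zero : h 0 = 1 := rfl

theorem h_one : h 1 = X 0 := rfl

theorem X_sub_X_mul_aevalEsymm_h :
    ∀ k, (X 0 - X 1) * aevalEsymm ℚ (h k) = X 0 ^ (k + 1) - X 1 ^ (k + 1)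
  | 0 => by simp [h_zero]
  | 1 => by simp [h_one]; ring
  | k + 2 => by
    rw [h_add_two, map_sub, map_mul, map_mul, aevalEsymm_X_zero, aevalEsymm_X_one]
    linear_combination (X 0 + X 1) * X_sub_X_mul_aevalEsymm_h (k + 1) -
      X 0 * X 1 * X_sub_X_mul_aevalEsymm_h k

theorem totalDegree_h_le : ∀ k, (h k).totalDegree ≤ k
  | 0 => by simp [h_zero]
  | 1 => by simp [h_one, totalDegree_X]
  | k + 2 => by
    rw [h_add_two]
    refine (totalDegree_sub _ _).trans (max_le ?_ ?_)
    · exact (totalDegree_X_mul_le _ _).trans (by linarith [totalDegree_h_le (k + 1)])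
    · exact (totalDegree_X_mul_le _ _).trans (by linarith [totalDegree_h_le k])

theorem totalDegree_h_sub_X_pow_le : ∀ k, (h (k + 1) - X 0 ^ (k + 1)).totalDegree ≤ k
  | 0 => by simp [h_one]
  | k + 1 => by
    have hrec : h (k + 2) - X 0 ^ (k + 2) = X 0 * (h (k + 1) - X 0 ^ (k + 1)) - X 1 * h k := by
      rw [h_add_two]; ring
    rw [hrec]
    refine (totalDegree_sub _ _).trans (max_le ?_ ?_)
    · exact (totalDegree_X_mul_le _ _).trans (by linarith [totalDegree_h_sub_X_pow_le k])
    · exact (totalDegree_X_mul_le _ _).trans (by linarith [totalDegree_h_le k])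

section Ideal

variable {J : Ideal (MvPolynomial (Fin 2) ℚ)} {m : ℕ}

theorem h_mem_of_le (hm : h m ∈ J) (hm' : h (m + 1) ∈ J) {k : ℕ} (hk : m ≤ k) :
    h k ∈ J := by
  suffices h k ∈ J ∧ h (k + 1) ∈ J from this.1
  induction k, hk using Nat.le_induction with
  | base => exact ⟨hm, hm'⟩
  | succ k _ ih =>
    refine ⟨ih.2, ?_⟩
    rw [h_add_two]
    exact sub_mem (J.mul_mem_left _ ih.2) (J.mul_mem_left _ ih.1)

theorem X_one_pow_mul_h_mem (hm : h m ∈ J) (hm' : h (m + 1) ∈ J) :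
    ∀ {i j : ℕ}, m ≤ i + j → X 1 ^ j * h i ∈ J
  | i, 0, hij => by simpa using h_mem_of_le hm hm' hij
  | i, j + 1, hij => by
    have hrec : X 1 ^ (j + 1) * h i = X 0 * (X 1 ^ j * h (i + 1)) - X 1 ^ j * h (i + 2) := by
      rw [h_add_two]; ring
    rw [hrec]
    exact sub_mem (J.mul_mem_left _ (X_one_pow_mul_h_mem hm hm' (by omega)))
      (X_one_pow_mul_h_mem hm hm' (by omega))

end Ideal

section Quotient

variable {n : ℕ}

local notation "I" n => (Ideal.span {h (n + 1), h (n + 2)} : Ideal (MvPolynomial (Fin 2) ℚ))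

theorem X_sub_X_mul_aevalEsymm_mem_span_X_pow {p : MvPolynomial (Fin 2) ℚ} (hp : p ∈ I n) :
    (X 0 - X 1) * aevalEsymm ℚ p ∈
      Ideal.span (Set.range fun i => (X i ^ (n + 2) : MvPolynomial (Fin 2) ℚ)) := by
  set J := Ideal.span (Set.range fun i => (X i ^ (n + 2) : MvPolynomial (Fin 2) ℚ))
  have hJ {k : ℕ} (hk : n + 1 ≤ k) : (X 0 - X 1) * aevalEsymm ℚ (h k) ∈ J := by
    rw [X_sub_X_mul_aevalEsymm_h]
    exact sub_mem (J.pow_mem_of_pow_mem (Ideal.subset_span ⟨0, rfl⟩) (by omega))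
      (J.pow_mem_of_pow_mem (Ideal.subset_span ⟨1, rfl⟩) (by omega))
  obtain ⟨A, B, rfl⟩ := Ideal.mem_span_pair.1 hp
  rw [map_add, map_mul, map_mul, mul_add, mul_left_comm, mul_left_comm _ (aevalEsymm ℚ B)]
  exact add_mem (J.mul_mem_left _ (hJ le_rfl)) (J.mul_mem_left _ (hJ (by omega)))

theorem eq_zero_of_mem_span_h_of_totalDegree_le {p : MvPolynomial (Fin 2) ℚ} (hp : p ∈ I n)
    (hdeg : p.totalDegree ≤ n) : p = 0 := by
  have hdeg' (i : Fin 2) : degreeOf i ((X 0 - X 1) * aevalEsymm ℚ p) ≤ n + 1 := by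
    refine (degreeOf_mul_le _ _ _).trans ?_
    have hsub := (degreeOf_sub_le i (X 0) (X 1)).trans
      (max_le (degreeOf_X_le_one (R := ℚ) _ _) (degreeOf_X_le_one _ _))
    linarith [degreeOf_aevalEsymm_le i p]
  have hzero := eq_zero_of_degreeOf_le_of_mem_span_X_pow hdeg'
    (X_sub_X_mul_aevalEsymm_mem_span_X_pow hp)
  rw [mul_eq_zero, sub_eq_zero, (X_injective (σ := Fin 2) (R := ℚ)).eq_iff] at hzero
  exact aevalEsymm_injective (by rw [hzero.resolve_left (by decide), map_zero])

theorem exists_totalDegree_lt_sub_mem_span_h {a b : ℕ} (hab : n + 1 ≤ a + b) :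
    ∃ q : MvPolynomial (Fin 2) ℚ, q.totalDegree < a + b ∧ X 0 ^ a * X 1 ^ b - q ∈ I n := by
  have hmem {i j : ℕ} (hij : n + 1 ≤ i + j) : X 1 ^ j * h i ∈ I n :=
    X_one_pow_mul_h_mem (Ideal.subset_span (by simp)) (Ideal.subset_span (by simp)) hij
  by_cases hb : n + 1 ≤ b
  · refine ⟨0, by simp; omega, ?_⟩
    simpa [h_zero] using (I n).mul_mem_left (X 0 ^ a) (hmem (i := 0) (j := b) (by omega))
  obtain ⟨i, hi⟩ : ∃ i, i + 1 + b = n + 1 := ⟨n - b, by omega⟩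
  refine ⟨-(X 0 ^ (a - (i + 1)) * X 1 ^ b * (h (i + 1) - X 0 ^ (i + 1))), ?_, ?_⟩
  · rw [totalDegree_neg]
    refine (totalDegree_mul _ _).trans_lt ?_
    have := (totalDegree_mul (X 0 ^ (a - (i + 1))) (X 1 ^ b : MvPolynomial (Fin 2) ℚ))
    rw [totalDegree_X_pow, totalDegree_X_pow] at this
    have := totalDegree_h_sub_X_pow_le i
    omega
  · have hsplit : (X 0 : MvPolynomial (Fin 2) ℚ) ^ a = X 0 ^ (a - (i + 1)) * X 0 ^ (i + 1) := by
      rw [← pow_add, Nat.sub_add_cancel (by omega)]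
    have hrw : X 0 ^ a * X 1 ^ b - -(X 0 ^ (a - (i + 1)) * X 1 ^ b * (h (i + 1) - X 0 ^ (i + 1)))
        = X 0 ^ (a - (i + 1)) * (X 1 ^ b * h (i + 1)) := by
      rw [hsplit]; ring
    rw [hrw]
    exact (I n).mul_mem_left _ (hmem (by omega))

theorem span_h_sup_restrictTotalDegree_eq_top :
    (I n).restrictScalars ℚ ⊔ restrictTotalDegree (Fin 2) ℚ n = ⊤ := by
  set N := (I n).restrictScalars ℚ ⊔ restrictTotalDegree (Fin 2) ℚ n
  suffices ∀ d, restrictTotalDegree (Fin 2) ℚ d ≤ N from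
    eq_top_iff.2 fun p _ => this p.totalDegree ((mem_restrictTotalDegree _ _ _).2 le_rfl)
  intro d
  induction d using Nat.strong_induction_on with
  | _ d ih =>
    refine restrictTotalDegree_le fun m hm => ?_
    rw [Finsupp.sum_fintype _ _ fun _ => rfl, Fin.sum_univ_two] at hm
    by_cases hmn : m 0 + m 1 ≤ n
    · refine Submodule.mem_sup_right ((mem_restrictTotalDegree _ _ _).2 ?_)
      rw [monomial_one_fin_two]
      exact (totalDegree_mul _ _).trans (by simp [totalDegree_X_pow]; omega)
    obtain ⟨q, hq, hmem⟩ := exists_totalDegree_lt_sub_mem_span_h (n := n) (not_le.1 hmn)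
    rw [monomial_one_fin_two, ← sub_add_cancel (X 0 ^ m 0 * X 1 ^ m 1) q]
    exact N.add_mem (Submodule.mem_sup_left hmem)
      (ih _ (by omega) ((mem_restrictTotalDegree _ _ _).2 le_rfl))

theorem isCompl_span_h_restrictTotalDegree :
    IsCompl ((I n).restrictScalars ℚ) (restrictTotalDegree (Fin 2) ℚ n) where
  disjoint := (Submodule.disjoint_def).2 fun _ hp hdeg =>
    eq_zero_of_mem_span_h_of_totalDegree_le hp ((mem_restrictTotalDegree _ _ _).1 hdeg)
  codisjoint := codisjoint_iff.2 span_h_sup_restrictTotalDegree_eq_top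

end Quotient

theorem stmt5_general (n : ℕ) :
    FiniteDimensional ℚ
      (MvPolynomial (Fin 2) ℚ ⧸
        (Ideal.span {h (n + 1), h (n + 2)} : Ideal (MvPolynomial (Fin 2) ℚ))) ∧
    Module.finrank ℚ
      (MvPolynomial (Fin 2) ℚ ⧸
        (Ideal.span {h (n + 1), h (n + 2)} : Ideal (MvPolynomial (Fin 2) ℚ)))
      = (n + 1) * (n + 2) / 2 := by
  let e := (Submodule.Quotient.restrictScalarsEquiv ℚ _).symm ≪≫ₗ
    Submodule.quotientEquivOfIsCompl _ _ (isCompl_span_h_restrictTotalDegree (n := n))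
  exact ⟨Module.Finite.equiv e.symm, e.finrank_eq.trans (finrank_restrictTotalDegree_fin_two n)⟩

/-- For `n ≥ 1`, the ring `ℚ[x,y]/(h_{n+1}, h_{n+2})` is a finite-dimensional `ℚ`-vector
space of dimension `(n+1)(n+2)/2`. -/
theorem stmt5 (n : ℕ) (hn : 1 ≤ n) :
    FiniteDimensional ℚ
      (MvPolynomial (Fin 2) ℚ ⧸
        (Ideal.span {h (n + 1), h (n + 2)} : Ideal (MvPolynomial (Fin 2) ℚ))) ∧
    Module.finrank ℚ
      (MvPolynomial (Fin 2) ℚ ⧸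
        (Ideal.span {h (n + 1), h (n + 2)} : Ideal (MvPolynomial (Fin 2) ℚ)))
      = (n + 1) * (n + 2) / 2 :=
  stmt5_general n
end

section
/- Let n ≥ 1. For every polynomial Q ∈ ℚ[x,y] that is weighted homogeneous of degree 4 (deg x = 1, deg y = 2), there exists a nonzero polynomial P ∈ ℚ[x,y], weighted homogeneous of degree n−1, such that P·Q lies in the ideal (h_{n+1}, h_{n+2}). (Algebraic form of the first step of Proposition 2.7: multiplication by any degree-4 class from degree n−1 to degree n+3 in the Chow ring of the Grassmannian of lines in ℙ^{n+1} is not injective.) -/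
/-!
Put `m = ⌊(n-1)/2⌋`. The monomials `x^(n-1-2j) y^j`, `0 ≤ j ≤ m`, give `m + 1` independent
polynomials of weighted degree `n - 1`. Every polynomial of weighted degree `n + 3` is a
combination of the products `y^c h_a` with `a + 2c = n + 3`; modulo `(h_{n+1}, h_{n+2})` those
with `c ≤ 2` vanish, since `h_k` lies in the ideal for all `k ≥ n + 1` and
`y² h_{n-1} = (x² - y) h_{n+1} - x h_{n+2}`. So the classes of degree `n + 3` span a space of
dimension at most `m`, and multiplication by `Q` has a kernel on the degree `n - 1` monomials.
-/

open MvPolynomial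

theorem exists_ne_zero_mem_span_map_eq_zero {K V W ι : Type*} [Field K] [AddCommGroup V]
    [Module K V] [AddCommGroup W] [Module K W] [Fintype ι] {v : ι → V}
    (hv : LinearIndependent K v) (f : V →ₗ[K] W) (U : Submodule K W) [FiniteDimensional K U]
    (hU : Module.finrank K U < Fintype.card ι)
    (hf : ∀ x ∈ Submodule.span K (Set.range v), f x ∈ U) :
    ∃ x ∈ Submodule.span K (Set.range v), x ≠ 0 ∧ f x = 0 := by
  have mem_span (c : ι → K) :
      Fintype.linearCombination K v c ∈ Submodule.span K (Set.range v) :=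
    Fintype.range_linearCombination K v ▸ LinearMap.mem_range_self _ c
  let g := (f ∘ₗ Fintype.linearCombination K v).codRestrict U fun c => hf _ (mem_span c)
  have hker : LinearMap.ker g ≠ ⊥ :=
    LinearMap.ker_ne_bot_of_finrank_lt (by rwa [Module.finrank_fintype_fun_eq_card])
  obtain ⟨c, hc, hc0⟩ := (Submodule.ne_bot_iff _).mp hker
  refine ⟨_, mem_span c, fun h0 => hc0 ?_, congrArg Subtype.val (LinearMap.mem_ker.mp hc)⟩
  exact hv.fintypeLinearCombination_injective (h0.trans (map_zero _).symm)

namespace MvPolynomial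

theorem weight_fin_two_one_two (d : Fin 2 →₀ ℕ) :
    Finsupp.weight ![1, 2] d = d 0 + 2 * d 1 := by
  rw [Finsupp.weight_apply, Finsupp.sum_fintype _ _ (by simp), Fin.sum_univ_two]
  simp [mul_comm]

end MvPolynomial

namespace GrassmannianLines

theorem h_add_two (k : ℕ) : h (k + 2) = X 0 * h (k + 1) - X 1 * h k := rfl

/-- The relations of the Chow ring of the Grassmannian of lines in `ℙ^{n+1}`. -/
noncomputable def chowIdeal (n : ℕ) : Ideal (MvPolynomial (Fin 2) ℚ) :=
  Ideal.span {h (n + 1), h (n + 2)}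

theorem h_mem_chowIdeal {n k : ℕ} (hk : n + 1 ≤ k) : h k ∈ chowIdeal n := by
  induction k using Nat.strong_induction_on with
  | _ k ih =>
    obtain rfl | rfl | ⟨t, rfl, ht⟩ :
        k = n + 1 ∨ k = n + 2 ∨ ∃ t, k = t + 2 ∧ n + 1 ≤ t := by
      rcases Nat.exists_eq_add_of_le hk with ⟨t, rfl⟩; rcases t with _ | _ | t <;> grind
    · exact Ideal.subset_span (by simp)
    · exact Ideal.subset_span (by simp)
    · rw [h_add_two]
      exact sub_mem (Ideal.mul_mem_left _ _ (ih _ (by omega) (by omega)))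
        (Ideal.mul_mem_left _ _ (ih _ (by omega) (by omega)))

theorem X1_sq_mul_h_eq (s : ℕ) :
    X 1 ^ 2 * h s = (X 0 ^ 2 - X 1) * h (s + 2) - X 0 * h (s + 3) := by
  rw [h_add_two (s + 1), h_add_two s]
  ring

theorem X1_pow_mul_h_mem_chowIdeal {n a c : ℕ} (hn : 1 ≤ n) (hac : a + 2 * c = n + 3)
    (hc : c ≤ 2) : X 1 ^ c * h a ∈ chowIdeal n := by
  interval_cases c
  · simpa using h_mem_chowIdeal (n := n) (k := a) (by omega)
  · exact Ideal.mul_mem_left _ _ (h_mem_chowIdeal (by omega))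
  · obtain ⟨s, rfl⟩ : ∃ s, n = s + 1 := ⟨n - 1, by omega⟩
    obtain rfl : a = s := by omega
    rw [X1_sq_mul_h_eq]
    exact sub_mem (Ideal.mul_mem_left _ _ (Ideal.subset_span (by simp)))
      (Ideal.mul_mem_left _ _ (Ideal.subset_span (by simp)))

noncomputable def hSpan (D : ℕ) : Submodule ℚ (MvPolynomial (Fin 2) ℚ) :=
  Submodule.span ℚ {r | ∃ a c : ℕ, a + 2 * c = D ∧ r = X 1 ^ c * h a}

theorem X1_pow_mul_h_mem_hSpan {a c D : ℕ} (hD : a + 2 * c = D) : X 1 ^ c * h a ∈ hSpan D :=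
  Submodule.subset_span ⟨a, c, hD, rfl⟩

theorem X0_mul_mem_hSpan {D : ℕ} {z : MvPolynomial (Fin 2) ℚ} (hz : z ∈ hSpan D) :
    X 0 * z ∈ hSpan (D + 1) := by
  induction hz using Submodule.span_induction with
  | mem r hr =>
    obtain ⟨a, c, rfl, rfl⟩ := hr
    rcases a with _ | a
    · rw [show X 0 * (X 1 ^ c * h 0) = X 1 ^ c * h 1 by simp [h, mul_comm]]
      exact X1_pow_mul_h_mem_hSpan (by omega)
    · rw [show X 0 * (X 1 ^ c * h (a + 1)) = X 1 ^ c * h (a + 2) + X 1 ^ (c + 1) * h a by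
        rw [h_add_two]; ring]
      exact add_mem (X1_pow_mul_h_mem_hSpan (by omega)) (X1_pow_mul_h_mem_hSpan (by omega))
  | zero => simp
  | add u v _ _ hu hv => rw [mul_add]; exact add_mem hu hv
  | smul q u _ hu => rw [mul_smul_comm]; exact Submodule.smul_mem _ _ hu

theorem X0_pow_mul_X1_pow_mem_hSpan (k b : ℕ) : X 0 ^ k * X 1 ^ b ∈ hSpan (k + 2 * b) := by
  induction k with
  | zero => simpa [h] using X1_pow_mul_h_mem_hSpan (a := 0) (c := b) rfl
  | succ k ih =>
    rw [pow_succ', mul_assoc, show k + 1 + 2 * b = k + 2 * b + 1 by omega]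
    exact X0_mul_mem_hSpan ih

theorem monomial_mem_hSpan (d : Fin 2 →₀ ℕ) (r : ℚ) :
    monomial d r ∈ hSpan (Finsupp.weight ![1, 2] d) := by
  have hd : monomial d r = r • (X 0 ^ d 0 * X 1 ^ d 1) := by
    have hsplit : Finsupp.single 0 (d 0) + Finsupp.single 1 (d 1) = d := by
      ext i
      fin_cases i <;> simp
    rw [X_pow_eq_monomial, X_pow_eq_monomial, monomial_mul, smul_monomial, hsplit]
    simp
  rw [hd, weight_fin_two_one_two]
  exact Submodule.smul_mem _ _ (X0_pow_mul_X1_pow_mem_hSpan _ _)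

theorem weightedHomogeneousSubmodule_le_hSpan (D : ℕ) :
    weightedHomogeneousSubmodule ℚ ![1, 2] D ≤ hSpan D := by
  intro φ hφ
  rw [mem_weightedHomogeneousSubmodule] at hφ
  rw [φ.as_sum]
  refine Submodule.sum_mem _ fun d hd => ?_
  simpa [hφ (mem_support_iff.mp hd)] using monomial_mem_hSpan d (coeff d φ)

noncomputable def topClass (n : ℕ) (i : Fin ((n - 1) / 2)) :
    MvPolynomial (Fin 2) ℚ ⧸ chowIdeal n :=
  Ideal.Quotient.mk _ (X 1 ^ ((i : ℕ) + 3) * h (n - 3 - 2 * i))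

theorem map_hSpan_le_span_topClass {n : ℕ} (hn : 1 ≤ n) :
    (hSpan (n + 3)).map (Ideal.Quotient.mkₐ ℚ (chowIdeal n)).toLinearMap ≤
      Submodule.span ℚ (Set.range (topClass n)) := by
  refine (Submodule.map_span_le _ _ _).mpr ?_
  rintro _ ⟨a, c, hac, rfl⟩
  by_cases hc : c ≤ 2
  · rw [AlgHom.toLinearMap_apply, Ideal.Quotient.mkₐ_eq_mk,
      Ideal.Quotient.eq_zero_iff_mem.mpr (X1_pow_mul_h_mem_chowIdeal hn hac hc)]
    exact zero_mem _
  · obtain ⟨i, rfl⟩ : ∃ i, c = i + 3 := ⟨c - 3, by omega⟩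
    refine Submodule.subset_span ⟨⟨i, by omega⟩, ?_⟩
    simp only [topClass, AlgHom.toLinearMap_apply, Ideal.Quotient.mkₐ_eq_mk]
    congr 3
    omega

theorem finrank_span_topClass_le (n : ℕ) :
    Module.finrank ℚ (Submodule.span ℚ (Set.range (topClass n))) ≤ (n - 1) / 2 :=
  (finrank_range_le_card (R := ℚ) (topClass n)).trans_eq (Fintype.card_fin _)

noncomputable def lowMonomial (D : ℕ) (j : Fin (D / 2 + 1)) : MvPolynomial (Fin 2) ℚ :=
  monomial (Finsupp.single 0 (D - 2 * (j : ℕ)) + Finsupp.single 1 (j : ℕ)) 1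

theorem linearIndependent_lowMonomial (D : ℕ) : LinearIndependent ℚ (lowMonomial D) := by
  have hinj : Function.Injective
      fun j : Fin (D / 2 + 1) =>
        Finsupp.single (0 : Fin 2) (D - 2 * (j : ℕ)) + Finsupp.single 1 (j : ℕ) :=
    fun j k hjk => Fin.ext (by simpa using DFunLike.congr_fun hjk 1)
  have := (basisMonomials (Fin 2) ℚ).linearIndependent.comp _ hinj
  rwa [coe_basisMonomials] at this

theorem span_lowMonomial_le (D : ℕ) :
    Submodule.span ℚ (Set.range (lowMonomial D)) ≤
      weightedHomogeneousSubmodule ℚ ![1, 2] D := by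
  rw [Submodule.span_le]
  rintro _ ⟨j, rfl⟩
  refine isWeightedHomogeneous_monomial _ _ _ ?_
  have hj : 2 * (j : ℕ) ≤ D := by have := j.isLt; omega
  simpa [weight_fin_two_one_two] using Nat.sub_add_cancel hj

end GrassmannianLines

open GrassmannianLines in
/-- For every weighted homogeneous `Q` of degree `4` (with `deg x = 1`, `deg y = 2`)
there is a nonzero weighted homogeneous `P` of degree `n−1` with
`P·Q ∈ (h_{n+1}, h_{n+2})`: multiplication by a degree-4 class from degree `n−1` to
degree `n+3` in the Chow ring of the Grassmannian of lines in `ℙ^{n+1}` is not injective. -/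
theorem stmt10 (n : ℕ) (hn : 1 ≤ n) (Q : MvPolynomial (Fin 2) ℚ)
    (hQ : Q.IsWeightedHomogeneous ![1, 2] 4) :
    ∃ P : MvPolynomial (Fin 2) ℚ, P ≠ 0 ∧ P.IsWeightedHomogeneous ![1, 2] (n - 1) ∧
      P * Q ∈ (Ideal.span {h (n + 1), h (n + 2)} : Ideal (MvPolynomial (Fin 2) ℚ)) := by
  have hdeg (P) (hP : P ∈ Submodule.span ℚ (Set.range (lowMonomial (n - 1)))) :
      P.IsWeightedHomogeneous ![1, 2] (n - 1) :=
    span_lowMonomial_le _ hP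
  have hmul (P) (hP : P.IsWeightedHomogeneous ![1, 2] (n - 1)) : P * Q ∈ hSpan (n + 3) := by
    refine weightedHomogeneousSubmodule_le_hSpan _ ?_
    simpa [show n - 1 + 4 = n + 3 by omega] using hP.mul hQ
  have := FiniteDimensional.span_of_finite ℚ (Set.finite_range (topClass n))
  obtain ⟨P, hP, hP0, hPQ⟩ := exists_ne_zero_mem_span_map_eq_zero
    (linearIndependent_lowMonomial (n - 1))
    ((Ideal.Quotient.mkₐ ℚ (chowIdeal n)).toLinearMap ∘ₗ LinearMap.mulRight ℚ Q)
    (Submodule.span ℚ (Set.range (topClass n)))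
    (by simpa using (finrank_span_topClass_le n).trans_lt (Nat.lt_succ_self _))
    fun P hP => map_hSpan_le_span_topClass hn ⟨_, hmul P (hdeg P hP), rfl⟩
  exact ⟨P, hP0, hdeg P hP, Ideal.Quotient.eq_zero_iff_mem.mp hPQ⟩
end
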